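/- (Improvement step of the ODOEM algorithm.) Let ξ be a design and z ∈ X a point such that d(z,ξ) > p − Tr( M(ξ)⁻¹ C ), where d(z,ξ) = g(z)ᵀ M(ξ)⁻¹ g(z). Then there exists α ∈ (0,1) such that det( (1−α)·M(ξ) + α·( g(z)g(z)ᵀ + C ) ) > det M(ξ); that is, mixing ξ with the single-point design at z strictly increases the determinant of the information matrix. -/

import Mathlib

open MeasureTheory Matrix

/-- The information matrix `M(ξ) = ∫_X g(z) g(z)ᵀ dξ(z) + C` of a design `ξ`
(a Borel probability measure on `X ⊆ ℝ^d`), defined entrywise. -/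
noncomputable def infoMatrix {d p : ℕ} {X : Set (Fin d → ℝ)}
    (g : (Fin d → ℝ) → Fin p → ℝ) (C : Matrix (Fin p) (Fin p) ℝ)
    (ξ : Measure X) : Matrix (Fin p) (Fin p) ℝ :=
  Matrix.of fun i j => (∫ z, g (z : Fin d → ℝ) i * g (z : Fin d → ℝ) j ∂ξ) + C i j

/-- The prediction variance `d(z,ξ) = g(z)ᵀ M(ξ)⁻¹ g(z)`. -/
noncomputable def predVar {d p : ℕ} {X : Set (Fin d → ℝ)}
    (g : (Fin d → ℝ) → Fin p → ℝ) (C : Matrix (Fin p) (Fin p) ℝ)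
    (ξ : Measure X) (z : Fin d → ℝ) : ℝ :=
  g z ⬝ᵥ ((infoMatrix g C ξ)⁻¹ *ᵥ g z)

/-!
Write `M = M(ξ)` and `N = g(z)g(z)ᵀ + C`. The matrix `M` is positive definite, being `C` plus
an integral of the positive semidefinite matrices `g gᵀ`, so
`(1 - α) M + α N = M (1 + α D)` with `D = M⁻¹ (N - M)`. Since
`det (1 + α D) = 1 + α tr D + O(α²)`, the determinant increases for small `α > 0` as soon as
`tr D = d(z,ξ) + tr (M⁻¹ C) - p` is positive, which is the hypothesis.
-/

open Filter Topology Set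

section MomentMatrix

variable {α n : Type*} [MeasurableSpace α] [Fintype n]

theorem dotProduct_mulVec_integral_mul (μ : Measure α) (f : α → n → ℝ)
    (hf : ∀ i j, Integrable (fun a => f a i * f a j) μ) (x : n → ℝ) :
    x ⬝ᵥ (Matrix.of (fun i j => ∫ a, f a i * f a j ∂μ) *ᵥ x) = ∫ a, (x ⬝ᵥ f a) ^ 2 ∂μ := by
  have hsq : ∀ a, (x ⬝ᵥ f a) ^ 2 = ∑ i, ∑ j, x i * x j * (f a i * f a j) := fun a => by
    simp only [dotProduct, sq, Finset.sum_mul_sum]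
    exact Finset.sum_congr rfl fun i _ => Finset.sum_congr rfl fun j _ => by ring
  simp_rw [hsq]
  rw [integral_finsetSum _ fun i _ => integrable_finsetSum _ fun j _ => (hf i j).const_mul _]
  simp_rw [integral_finsetSum _ fun j _ => (hf _ j).const_mul _, integral_const_mul]
  simp only [dotProduct, mulVec, Matrix.of_apply, Finset.mul_sum]
  exact Finset.sum_congr rfl fun i _ => Finset.sum_congr rfl fun j _ => by ring

theorem posSemidef_of_integral_mul (μ : Measure α) (f : α → n → ℝ)
    (hf : ∀ i j, Integrable (fun a => f a i * f a j) μ) :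
    (Matrix.of fun i j => ∫ a, f a i * f a j ∂μ).PosSemidef := by
  refine .of_dotProduct_mulVec_nonneg ?_ fun x => ?_
  · ext i j
    simp only [conjTranspose_apply, of_apply, star_trivial, mul_comm]
  · rw [star_trivial, dotProduct_mulVec_integral_mul μ f hf]
    exact integral_nonneg fun a => sq_nonneg _

end MomentMatrix

theorem infoMatrix_posDef {d p : ℕ} {X : Set (Fin d → ℝ)} [CompactSpace X]
    {g : (Fin d → ℝ) → Fin p → ℝ} (hg : Continuous g)
    {C : Matrix (Fin p) (Fin p) ℝ} (hC : C.PosDef) (ξ : Measure X) [IsFiniteMeasure ξ] :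
    (infoMatrix g C ξ).PosDef := by
  have hint : ∀ i j, Integrable (fun w : X => g w i * g w j) ξ := fun i j =>
    Continuous.integrable_of_hasCompactSupport (by fun_prop)
      (HasCompactSupport.of_compactSpace _)
  exact .posSemidef_add (posSemidef_of_integral_mul ξ (fun w : X => g w) hint) hC

section Mixing

variable {n : Type*} [Fintype n] [DecidableEq n]

theorem sub_smul_add_smul_eq_mul_one_add_smul {K : Type*} [Field K] {M : Matrix n n K}
    (hM : IsUnit M.det) (N : Matrix n n K) (t : K) :
    (1 - t) • M + t • N = M * (1 + t • (M⁻¹ * (N - M))) := by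
  rw [Matrix.mul_add, Matrix.mul_one, Matrix.mul_smul, ← Matrix.mul_assoc,
    Matrix.mul_nonsing_inv M hM, Matrix.one_mul, smul_sub, sub_smul, one_smul]
  abel

theorem eventually_one_lt_det_one_add_smul {D : Matrix n n ℝ} (hD : 0 < D.trace) :
    ∀ᶠ t : ℝ in 𝓝[>] 0, 1 < (1 + t • D).det := by
  set P := (det (1 + (Polynomial.X : Polynomial ℝ) • D.map Polynomial.C)).divX.divX
  have hpos : ∀ᶠ t in 𝓝 (0 : ℝ), 0 < D.trace + P.eval t * t :=
    continuousAt_const.eventually_lt (by fun_prop) (by simpa using hD)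
  filter_upwards [hpos.filter_mono nhdsWithin_le_nhds, self_mem_nhdsWithin]
    with t ht (ht0 : 0 < t)
  rw [det_one_add_smul]
  nlinarith [mul_pos ht0 ht]

theorem exists_det_lt_det_sub_smul_add_smul {M N : Matrix n n ℝ} (hM : 0 < M.det)
    (hMN : 0 < (M⁻¹ * (N - M)).trace) :
    ∃ t ∈ Ioo (0 : ℝ) 1, M.det < ((1 - t) • M + t • N).det := by
  obtain ⟨t, ht, ht01⟩ :=
    ((eventually_one_lt_det_one_add_smul hMN).and (Ioo_mem_nhdsGT one_pos)).exists
  refine ⟨t, ht01, ?_⟩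
  rw [sub_smul_add_smul_eq_mul_one_add_smul hM.ne'.isUnit, det_mul]
  exact lt_mul_of_one_lt_right hM ht

end Mixing

theorem trace_inv_mul_vecMulVec_add_sub {K : Type*} [Field K] {p : ℕ}
    {M : Matrix (Fin p) (Fin p) K} (hM : IsUnit M.det) (v : Fin p → K)
    (C : Matrix (Fin p) (Fin p) K) :
    (M⁻¹ * (vecMulVec v v + C - M)).trace = v ⬝ᵥ (M⁻¹ *ᵥ v) + (M⁻¹ * C).trace - p := by
  rw [Matrix.mul_sub, Matrix.mul_add, nonsing_inv_mul M hM, trace_sub, trace_add, trace_one,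
    mul_vecMulVec, trace_vecMulVec, dotProduct_comm, Fintype.card_fin]

theorem exists_det_gt_of_predVar_gt_general {d p : ℕ}
    {X : Set (Fin d → ℝ)} (hX : IsCompact X)
    {g : (Fin d → ℝ) → Fin p → ℝ} (hg : Continuous g)
    {C : Matrix (Fin p) (Fin p) ℝ} (hC : C.PosDef)
    (ξ : Measure X) [IsProbabilityMeasure ξ]
    (z : Fin d → ℝ)
    (hgt : predVar g C ξ z > (p : ℝ) - Matrix.trace ((infoMatrix g C ξ)⁻¹ * C)) :
    ∃ α ∈ Set.Ioo (0 : ℝ) 1,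
      ((1 - α) • infoMatrix g C ξ + α • (vecMulVec (g z) (g z) + C)).det
        > (infoMatrix g C ξ).det := by
  have : CompactSpace X := isCompact_iff_compactSpace.mp hX
  have hM := (infoMatrix_posDef hg hC ξ).det_pos
  refine exists_det_lt_det_sub_smul_add_smul hM ?_
  rw [trace_inv_mul_vecMulVec_add_sub hM.ne'.isUnit]
  unfold predVar at hgt
  linarith

/-- Improvement step of the ODOEM algorithm: if `d(z,ξ) > p − Tr(M(ξ)⁻¹ C)`, then mixing
`ξ` with the single-point design at `z` strictly increases the determinant of the
information matrix for some `α ∈ (0,1)`. -/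
theorem exists_det_gt_of_predVar_gt {d p : ℕ} (hd : 1 ≤ d) (hp : 1 ≤ p)
    {X : Set (Fin d → ℝ)} (hX : IsCompact X)
    {g : (Fin d → ℝ) → Fin p → ℝ} (hg : Continuous g)
    {C : Matrix (Fin p) (Fin p) ℝ} (hC : C.PosDef)
    (ξ : Measure X) [IsProbabilityMeasure ξ]
    (z : Fin d → ℝ) (hz : z ∈ X)
    (hgt : predVar g C ξ z > (p : ℝ) - Matrix.trace ((infoMatrix g C ξ)⁻¹ * C)) :
    ∃ α ∈ Set.Ioo (0 : ℝ) 1,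
      ((1 - α) • infoMatrix g C ξ + α • (vecMulVec (g z) (g z) + C)).det
        > (infoMatrix g C ξ).det :=
  exists_det_gt_of_predVar_gt_general hX hg hC ξ z hgt
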